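/- arXiv:2104.06245 — 3 statements merged into one kernel-verified Lean document; each statement's English description precedes it below -/
import Mathlib

section
/- For every parameter vector θ ∈ ℝ^d and every coordinate i ∈ {1,…,d}, the losses J_CE and J_HARD are differentiable at θ and the i-th coordinate of the gradient bias b(θ) = ∇J_CE(θ) − ∇J_HARD(θ) satisfies b_i(θ) = Σ_{x∈X} pop(x) · Σ_{y∈Y} (p_θ(y|x) − γ_θ(y|x)) · ∂s_θ(x,y)/∂θ_i. -/
/-!
Both losses are averages of negative log-softmax terms `-log (exp f_j / ∑ₖ exp f_k)`, whose
gradient is the softmax average of the `∇f_k` minus `∇f_j`. The terms `-∇s(x, y₁)` of the gold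
label are the same in both gradients (the negatives are drawn from a probability distribution) and
cancel. What remains of `∇J_HARD` is an average of `∇s(x, y_k)` over candidate tuples and selected
positions `k`; regrouping it by the selected label `y` gives `∑_y γ_θ(y|x) ∇s(x, y)`.
-/

open Finset

noncomputable section

/-- Model distribution `p_θ(y|x) = exp(s_θ(x,y)) / Σ_{y'} exp(s_θ(x,y'))`. -/
def model {X Y : Type*} [Fintype Y] {d : ℕ} (s : (Fin d → ℝ) → X → Y → ℝ)
    (θ : Fin d → ℝ) (x : X) (y : Y) : ℝ :=
  Real.exp (s θ x y) / ∑ y' : Y, Real.exp (s θ x y')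

/-- NCE discriminator `π_θ(k|x, y_{1:K})`. -/
def nceProb {X Y : Type*} {d K : ℕ} (s : (Fin d → ℝ) → X → Y → ℝ)
    (θ : Fin d → ℝ) (x : X) (ys : Fin K → Y) (k : Fin K) : ℝ :=
  Real.exp (s θ x (ys k)) / ∑ k' : Fin K, Real.exp (s θ x (ys k'))

/-- Marginal `pop(x) = Σ_y pop(x,y)`. -/
def popX {X Y : Type*} [Fintype Y] (pop : X × Y → ℝ) (x : X) : ℝ :=
  ∑ y : Y, pop (x, y)

/-- Conditional `pop(y|x) = pop(x,y) / pop(x)`. -/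
def popCond {X Y : Type*} [Fintype Y] (pop : X × Y → ℝ) (x : X) (y : Y) : ℝ :=
  pop (x, y) / popX pop x

/-- Cross-entropy loss `J_CE(θ) = Σ_{(x,y)} pop(x,y) · (−log p_θ(y|x))`. -/
def JCE {X Y : Type*} [Fintype X] [Fintype Y] {d : ℕ}
    (s : (Fin d → ℝ) → X → Y → ℝ) (pop : X × Y → ℝ) (θ : Fin d → ℝ) : ℝ :=
  ∑ x : X, ∑ y : Y, pop (x, y) * (-Real.log (model s θ x y))

/-- Hard-negative NCE loss with `K = m + 1` candidates: the gold `y₁` plus `m` negatives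
`y_{2:K}` drawn from `h(·|x,y₁)`. -/
def JHARD {X Y : Type*} [Fintype X] [Fintype Y] {d m : ℕ}
    (s : (Fin d → ℝ) → X → Y → ℝ) (pop : X × Y → ℝ)
    (h : X → Y → (Fin m → Y) → ℝ) (θ : Fin d → ℝ) : ℝ :=
  ∑ x : X, ∑ y1 : Y, pop (x, y1) *
    ∑ yn : Fin m → Y, h x y1 yn * (-Real.log (nceProb s θ x (Fin.cons y1 yn) 0))

/-- Selection probability `γ_θ(y|x)`: the probability that `y` is included as a candidate
(either as the gold or a negative) and then selected by the NCE discriminator. -/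
def gam {X Y : Type*} [Fintype Y] [DecidableEq Y] {d m : ℕ}
    (s : (Fin d → ℝ) → X → Y → ℝ) (pop : X × Y → ℝ)
    (h : X → Y → (Fin m → Y) → ℝ) (θ : Fin d → ℝ) (x : X) (y : Y) : ℝ :=
  ∑ y1 : Y, popCond pop x y1 *
    ∑ yn : Fin m → Y, h x y1 yn *
      ∑ k : Fin (m + 1),
        (if (Fin.cons y1 yn : Fin (m + 1) → Y) k = y then (1 : ℝ) else 0) * nceProb s θ x (Fin.cons y1 yn) k

theorem hasFDerivAt_neg_log_softmax {E ι : Type*} [NormedAddCommGroup E] [NormedSpace ℝ E]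
    [Fintype ι] {f : ι → E → ℝ} {f' : ι → E →L[ℝ] ℝ} {θ : E}
    (hf : ∀ k, HasFDerivAt (f k) (f' k) θ) (j : ι) :
    HasFDerivAt (fun θ' => -Real.log (Real.exp (f j θ') / ∑ k, Real.exp (f k θ')))
      ((∑ k, (Real.exp (f k θ) / ∑ k', Real.exp (f k' θ)) • f' k) - f' j) θ := by
  have hZ : ∀ θ', 0 < ∑ k, Real.exp (f k θ') := fun θ' =>
    Finset.sum_pos (fun k _ => Real.exp_pos _) ⟨j, Finset.mem_univ j⟩
  have hlogZ : HasFDerivAt (fun θ' => Real.log (∑ k, Real.exp (f k θ')))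
      (∑ k, (Real.exp (f k θ) / ∑ k', Real.exp (f k' θ)) • f' k) θ := by
    convert (HasFDerivAt.fun_sum fun k _ => (hf k).exp).log (hZ θ).ne' using 1
    simp only [Finset.smul_sum, smul_smul, div_eq_inv_mul]
  have hsplit : (fun θ' => -Real.log (Real.exp (f j θ') / ∑ k, Real.exp (f k θ'))) =
      fun θ' => Real.log (∑ k, Real.exp (f k θ')) - f j θ' := by
    funext θ'
    rw [Real.log_div (Real.exp_pos _).ne' (hZ θ').ne', Real.log_exp]
    ring
  exact hsplit ▸ hlogZ.sub (hf j)

section Gradients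

variable {X Y : Type*} [Fintype X] [Fintype Y] {d m : ℕ}
  {s : (Fin d → ℝ) → X → Y → ℝ} {s' : X → Y → (Fin d → ℝ) →L[ℝ] ℝ} {θ : Fin d → ℝ}

theorem hasFDerivAt_JCE (pop : X × Y → ℝ) (hs : ∀ x y, HasFDerivAt (s · x y) (s' x y) θ) :
    HasFDerivAt (JCE s pop)
      (∑ x, ∑ y, pop (x, y) • ((∑ y', model s θ x y' • s' x y') - s' x y)) θ :=
  HasFDerivAt.fun_sum fun x _ => HasFDerivAt.fun_sum fun y _ =>
    (hasFDerivAt_neg_log_softmax (hs x) y).const_mul _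

theorem hasFDerivAt_JHARD (pop : X × Y → ℝ) (h : X → Y → (Fin m → Y) → ℝ)
    (hs : ∀ x y, HasFDerivAt (s · x y) (s' x y) θ) :
    HasFDerivAt (JHARD s pop h)
      (∑ x, ∑ y1, pop (x, y1) • ∑ yn, h x y1 yn •
        ((∑ k, nceProb s θ x (Fin.cons y1 yn) k • s' x ((Fin.cons y1 yn : Fin (m + 1) → Y) k))
          - s' x y1)) θ :=
  HasFDerivAt.fun_sum fun x _ => HasFDerivAt.fun_sum fun y1 _ =>
    (HasFDerivAt.fun_sum fun yn _ =>
      (hasFDerivAt_neg_log_softmax (fun k => hs x (Fin.cons y1 yn k)) 0).const_mul _).const_mul _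

end Gradients

theorem sum_indicator_smul {ι Y M : Type*} [Fintype ι] [Fintype Y] [DecidableEq Y]
    [AddCommMonoid M] [Module ℝ M] (g : ι → Y) (c : ι → ℝ) (w : Y → M) :
    ∑ y, (∑ k, (if g k = y then (1 : ℝ) else 0) * c k) • w y = ∑ k, c k • w (g k) := by
  simp only [Finset.sum_smul, ite_mul, one_mul, zero_mul, ite_smul, zero_smul]
  rw [Finset.sum_comm]
  simp [Finset.sum_ite_eq]

/-- When `popX pop x = 0`, `popCond pop x y` is the junk value `0 / 0 = 0`, but then nonnegativity
forces `pop (x, y) = 0`. -/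
theorem popX_mul_popCond {X Y : Type*} [Fintype Y] {pop : X × Y → ℝ} (hpop : ∀ p, 0 ≤ pop p)
    (x : X) (y : Y) : popX pop x * popCond pop x y = pop (x, y) := by
  rcases eq_or_ne (popX pop x) 0 with h0 | h0
  · rw [h0, zero_mul, eq_comm]
    exact (Finset.sum_eq_zero_iff_of_nonneg fun y _ => hpop (x, y)).mp h0 y (Finset.mem_univ y)
  · exact mul_div_cancel₀ _ h0

section Bias

variable {X Y M : Type*} [Fintype Y] [AddCommGroup M] [Module ℝ M] {d m : ℕ}
  (s : (Fin d → ℝ) → X → Y → ℝ) {pop : X × Y → ℝ} {h : X → Y → (Fin m → Y) → ℝ}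
  (θ : Fin d → ℝ) (x : X) (w : Y → M)

theorem sum_gam_smul [DecidableEq Y] :
    ∑ y, gam s pop h θ x y • w y = ∑ y1, popCond pop x y1 • ∑ yn, h x y1 yn •
      ∑ k, nceProb s θ x (Fin.cons y1 yn) k • w ((Fin.cons y1 yn : Fin (m + 1) → Y) k) := by
  simp only [← sum_indicator_smul, Finset.smul_sum, gam, Finset.sum_smul, mul_smul]
  rw [Finset.sum_comm]
  refine Finset.sum_congr rfl fun y1 _ => ?_
  rw [Finset.sum_comm]

theorem sum_pop_smul_ceGrad :
    ∑ y, pop (x, y) • ((∑ y', model s θ x y' • w y') - w y) =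
      popX pop x • ∑ y, model s θ x y • w y - ∑ y, pop (x, y) • w y := by
  simp only [smul_sub, Finset.sum_sub_distrib, ← Finset.sum_smul, popX]

theorem sum_pop_smul_hardGrad [DecidableEq Y] (hpop : ∀ p, 0 ≤ pop p)
    (hh1 : ∀ y1, ∑ yn, h x y1 yn = 1) :
    ∑ y1, pop (x, y1) • ∑ yn, h x y1 yn •
        ((∑ k, nceProb s θ x (Fin.cons y1 yn) k • w ((Fin.cons y1 yn : Fin (m + 1) → Y) k))
          - w y1) =
      popX pop x • ∑ y, gam s pop h θ x y • w y - ∑ y1, pop (x, y1) • w y1 := by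
  rw [sum_gam_smul, Finset.smul_sum, ← Finset.sum_sub_distrib]
  refine Finset.sum_congr rfl fun y1 _ => ?_
  rw [smul_smul, popX_mul_popCond hpop, ← smul_sub]
  simp only [smul_sub, Finset.sum_sub_distrib, ← Finset.sum_smul, hh1, one_smul]

theorem ceGrad_sub_hardGrad [DecidableEq Y] (hpop : ∀ p, 0 ≤ pop p)
    (hh1 : ∀ y1, ∑ yn, h x y1 yn = 1) :
    ∑ y, pop (x, y) • ((∑ y', model s θ x y' • w y') - w y) -
        ∑ y1, pop (x, y1) • ∑ yn, h x y1 yn •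
          ((∑ k, nceProb s θ x (Fin.cons y1 yn) k • w ((Fin.cons y1 yn : Fin (m + 1) → Y) k))
            - w y1) =
      popX pop x • ∑ y, (model s θ x y - gam s pop h θ x y) • w y := by
  rw [sum_pop_smul_ceGrad, sum_pop_smul_hardGrad s θ x w hpop hh1]
  simp only [sub_smul, Finset.sum_sub_distrib, smul_sub]
  abel

end Bias

theorem bias_formula_general {X Y : Type*} [Fintype X] [Fintype Y]
    [DecidableEq Y] {d m : ℕ}
    (s : (Fin d → ℝ) → X → Y → ℝ)
    (hs : ∀ x y, Differentiable ℝ fun θ => s θ x y)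
    (pop : X × Y → ℝ) (hpop : ∀ p, 0 ≤ pop p)
    (h : X → Y → (Fin m → Y) → ℝ)
    (hh1 : ∀ x y1, ∑ yn : Fin m → Y, h x y1 yn = 1)
    (θ : Fin d → ℝ) :
    DifferentiableAt ℝ (JCE s pop) θ ∧ DifferentiableAt ℝ (JHARD s pop h) θ ∧
      ∀ i : Fin d,
        fderiv ℝ (JCE s pop) θ (Pi.single i 1)
            - fderiv ℝ (JHARD s pop h) θ (Pi.single i 1) =
          ∑ x : X, popX pop x * ∑ y : Y,
            (model s θ x y - gam s pop h θ x y) *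
              fderiv ℝ (fun θ' => s θ' x y) θ (Pi.single i 1) := by
  have hs' x y : HasFDerivAt (s · x y) (fderiv ℝ (s · x y) θ) θ := (hs x y θ).hasFDerivAt
  have hCE := hasFDerivAt_JCE pop hs'
  have hHARD := hasFDerivAt_JHARD pop h hs'
  refine ⟨hCE.differentiableAt, hHARD.differentiableAt, fun i => ?_⟩
  rw [hCE.fderiv, hHARD.fderiv, ← sub_apply, ← Finset.sum_sub_distrib,
    Finset.sum_congr rfl fun x _ =>
      ceGrad_sub_hardGrad s θ x (fun y => fderiv ℝ (s · x y) θ) hpop (hh1 x)]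
  simp only [_root_.sum_apply, smul_apply, smul_eq_mul]

/-- **Theorem 1, bias of the hard-negative NCE gradient.**
`J_CE` and `J_HARD` are differentiable at every `θ`, and for every coordinate `i`,
`b_i(θ) = ∇J_CE(θ)_i − ∇J_HARD(θ)_i
       = Σ_x pop(x) · Σ_y (p_θ(y|x) − γ_θ(y|x)) · ∂s_θ(x,y)/∂θ_i`. -/
theorem bias_formula {X Y : Type*} [Fintype X] [Fintype Y] [Nonempty X] [Nonempty Y]
    [DecidableEq Y] {d m : ℕ} (hd : 1 ≤ d) (hm : 1 ≤ m)
    (s : (Fin d → ℝ) → X → Y → ℝ)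
    (hs : ∀ x y, Differentiable ℝ fun θ => s θ x y)
    (pop : X × Y → ℝ) (hpop : ∀ p, 0 ≤ pop p) (hpop1 : ∑ p : X × Y, pop p = 1)
    (h : X → Y → (Fin m → Y) → ℝ)
    (hh : ∀ x y1 yn, 0 ≤ h x y1 yn)
    (hh1 : ∀ x y1, ∑ yn : Fin m → Y, h x y1 yn = 1)
    (θ : Fin d → ℝ) :
    DifferentiableAt ℝ (JCE s pop) θ ∧ DifferentiableAt ℝ (JHARD s pop h) θ ∧
      ∀ i : Fin d,
        fderiv ℝ (JCE s pop) θ (Pi.single i 1)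
            - fderiv ℝ (JHARD s pop h) θ (Pi.single i 1) =
          ∑ x : X, popX pop x * ∑ y : Y,
            (model s θ x y - gam s pop h θ x y) *
              fderiv ℝ (fun θ' => s θ' x y) θ (Pi.single i 1) :=
  bias_formula_general s hs pop hpop h hh1 θ
end
end

section
/- Let K equal the cardinality of Y, and suppose the negative distribution h has the property that for every (x,y_1) with pop(x,y_1) > 0, h(·|x,y_1) is supported on tuples y_{2:K} ∈ Y^{K−1} such that y_1, y_2, …, y_K are pairwise distinct. Then the hard-negative NCE loss equals the cross-entropy loss: J_HARD(θ) = J_CE(θ) for every θ ∈ ℝ^d. -/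
open Finset

noncomputable section

theorem nceProb_eq_model_of_bijective {X Y : Type*} [Fintype Y] {d K : ℕ}
    (s : (Fin d → ℝ) → X → Y → ℝ) (θ : Fin d → ℝ) (x : X) {ys : Fin K → Y}
    (hys : Function.Bijective ys) (k : Fin K) :
    nceProb s θ x ys k = model s θ x (ys k) := by
  rw [nceProb, model, hys.sum_comp fun y => Real.exp (s θ x y)]

theorem sum_mul_neg_log_nceProb_eq_neg_log_model {X Y : Type*} [Fintype Y] {d m : ℕ}
    (hK : m + 1 = Fintype.card Y) (s : (Fin d → ℝ) → X → Y → ℝ) (θ : Fin d → ℝ)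
    (x : X) (y1 : Y) (w : (Fin m → Y) → ℝ) (hw1 : ∑ yn, w yn = 1)
    (hsupp : ∀ yn, w yn ≠ 0 → Function.Injective (Fin.cons y1 yn : Fin (m + 1) → Y)) :
    ∑ yn, w yn * -Real.log (nceProb s θ x (Fin.cons y1 yn) 0) = -Real.log (model s θ x y1) := by
  have hterm : ∀ yn, w yn * -Real.log (nceProb s θ x (Fin.cons y1 yn) 0)
      = w yn * -Real.log (model s θ x y1) := by
    intro yn
    rcases eq_or_ne (w yn) 0 with hzero | hne
    · simp [hzero]
    have hbij : Function.Bijective (Fin.cons y1 yn : Fin (m + 1) → Y) :=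
      (Fintype.bijective_iff_injective_and_card _).2 ⟨hsupp yn hne, by simp [hK]⟩
    rw [nceProb_eq_model_of_bijective s θ x hbij, Fin.cons_zero]
  rw [Fintype.sum_congr _ _ hterm, ← Finset.sum_mul, hw1, one_mul]

theorem JHARD_eq_JCE_of_full_support_general {X Y : Type*} [Fintype X] [Fintype Y] {d m : ℕ}
    (hK : m + 1 = Fintype.card Y)
    (s : (Fin d → ℝ) → X → Y → ℝ)
    (pop : X × Y → ℝ) (hpop : ∀ p, 0 ≤ pop p)
    (h : X → Y → (Fin m → Y) → ℝ)
    (hh1 : ∀ x y1, ∑ yn : Fin m → Y, h x y1 yn = 1)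
    (hsupp : ∀ x y1 yn, 0 < pop (x, y1) → h x y1 yn ≠ 0 →
      Function.Injective (Fin.cons y1 yn : Fin (m + 1) → Y))
    (θ : Fin d → ℝ) :
    JHARD s pop h θ = JCE s pop θ := by
  refine Fintype.sum_congr _ _ fun x => Fintype.sum_congr _ _ fun y1 => ?_
  rcases (hpop (x, y1)).eq_or_lt with hzero | hpos
  · simp [← hzero]
  rw [sum_mul_neg_log_nceProb_eq_neg_log_model hK s θ x y1 _ (hh1 x y1)
    fun yn => hsupp x y1 yn hpos]

/-- **with `K = |Y|` and distinct candidates, `J_HARD = J_CE`.**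
If `K = |Y|` (here `K = m + 1`) and, for every `(x,y₁)` with `pop(x,y₁) > 0`, the
negative distribution `h(·|x,y₁)` is supported on tuples making `y₁,…,y_K` pairwise
distinct, then `J_HARD(θ) = J_CE(θ)` for every `θ`. -/
theorem JHARD_eq_JCE_of_full_support {X Y : Type*} [Fintype X] [Fintype Y] [Nonempty X]
    [Nonempty Y] {d m : ℕ} (hd : 1 ≤ d) (hK : m + 1 = Fintype.card Y)
    (s : (Fin d → ℝ) → X → Y → ℝ)
    (pop : X × Y → ℝ) (hpop : ∀ p, 0 ≤ pop p) (hpop1 : ∑ p : X × Y, pop p = 1)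
    (h : X → Y → (Fin m → Y) → ℝ)
    (hh : ∀ x y1 yn, 0 ≤ h x y1 yn)
    (hh1 : ∀ x y1, ∑ yn : Fin m → Y, h x y1 yn = 1)
    (hsupp : ∀ x y1 yn, 0 < pop (x, y1) → h x y1 yn ≠ 0 →
      Function.Injective (Fin.cons y1 yn : Fin (m + 1) → Y))
    (θ : Fin d → ℝ) :
    JHARD s pop h θ = JCE s pop θ :=
  JHARD_eq_JCE_of_full_support_general hK s pop hpop h hh1 hsupp θ
end
end

section
/- Let K equal the cardinality of Y, and suppose the negative distribution h has the property that for every (x,y_1), h(·|x,y_1) is supported on tuples y_{2:K} ∈ Y^{K−1} such that y_1, y_2, …, y_K are pairwise distinct. Then for every θ ∈ ℝ^d, every x ∈ X with pop(x) > 0, and every y ∈ Y, the selection probability equals the model probability: γ_θ(y|x) = p_θ(y|x). -/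
open Finset

noncomputable section

/-!
Once the `K = |Y|` candidates are pairwise distinct they enumerate all of `Y`, so the NCE
softmax over the candidates is the full softmax `p_θ(·|x)` read through a bijection, and the
candidate equal to `y` is selected with probability exactly `p_θ(y|x)`. This holds for every
candidate tuple in the support of `h`, so averaging over `h(·|x,y₁)` and then over
`pop(y₁|x)` leaves `p_θ(y|x)` unchanged.
-/

theorem Fintype.sum_mul_eq_of_sum_eq_one {ι R : Type*} [Fintype ι] [NonAssocSemiring R]
    {w g : ι → R} {c : R} (hw : ∑ i, w i = 1) (hg : ∀ i, w i ≠ 0 → g i = c) :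
    ∑ i, w i * g i = c := by
  calc ∑ i, w i * g i = ∑ i, w i * c := by
        refine Finset.sum_congr rfl fun i _ => ?_
        by_cases hi : w i = 0
        · simp [hi]
        · rw [hg i hi]
    _ = c := by rw [← Finset.sum_mul, hw, one_mul]

theorem sum_popCond_eq_one {X Y : Type*} [Fintype Y] {pop : X × Y → ℝ} {x : X}
    (hx : popX pop x ≠ 0) : ∑ y, popCond pop x y = 1 := by
  simp only [popCond]
  rw [← Finset.sum_div]
  exact div_self hx

theorem sum_ite_mul_nceProb_of_bijective {X Y : Type*} [Fintype Y] [DecidableEq Y] {d K : ℕ}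
    (s : (Fin d → ℝ) → X → Y → ℝ) (θ : Fin d → ℝ) (x : X) {ys : Fin K → Y}
    (hys : Function.Bijective ys) (y : Y) :
    ∑ k, (if ys k = y then (1 : ℝ) else 0) * nceProb s θ x ys k = model s θ x y := by
  simp_rw [nceProb_eq_model_of_bijective s θ x hys]
  rw [Fintype.sum_bijective ys hys _ (fun y' => (if y' = y then (1 : ℝ) else 0) * model s θ x y')
    fun _ => rfl]
  simp

theorem gam_eq_model_of_full_support_general {X Y : Type*} [Fintype Y] [DecidableEq Y] {d m : ℕ}
    (hK : m + 1 = Fintype.card Y)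
    (s : (Fin d → ℝ) → X → Y → ℝ)
    (pop : X × Y → ℝ)
    (h : X → Y → (Fin m → Y) → ℝ)
    (hh1 : ∀ x y1, ∑ yn : Fin m → Y, h x y1 yn = 1)
    (hsupp : ∀ x y1 yn, h x y1 yn ≠ 0 →
      Function.Injective (Fin.cons y1 yn : Fin (m + 1) → Y))
    (θ : Fin d → ℝ) (x : X) (hx : 0 < popX pop x) (y : Y) :
    gam s pop h θ x y = model s θ x y := by
  have hcard : Fintype.card (Fin (m + 1)) = Fintype.card Y := by rw [Fintype.card_fin, hK]
  have hselect : ∀ y1 yn, h x y1 yn ≠ 0 →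
      ∑ k : Fin (m + 1), (if (Fin.cons y1 yn : Fin (m + 1) → Y) k = y then (1 : ℝ) else 0) *
        nceProb s θ x (Fin.cons y1 yn) k = model s θ x y := fun y1 yn hne =>
    sum_ite_mul_nceProb_of_bijective s θ x
      ((Fintype.bijective_iff_injective_and_card _).2 ⟨hsupp x y1 yn hne, hcard⟩) y
  exact Fintype.sum_mul_eq_of_sum_eq_one (sum_popCond_eq_one hx.ne') fun y1 _ =>
    Fintype.sum_mul_eq_of_sum_eq_one (hh1 x y1) (hselect y1)

/-- **with `K = |Y|` and distinct candidates, `γ` equals the model.**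
If `K = |Y|` (here `K = m + 1`) and every conditional `h(·|x,y₁)` is supported on tuples
making `y₁,…,y_K` pairwise distinct, then for every `θ`, every `x` with `pop(x) > 0`, and
every `y`, `γ_θ(y|x) = p_θ(y|x)`. -/
theorem gam_eq_model_of_full_support {X Y : Type*} [Fintype X] [Fintype Y] [Nonempty X]
    [Nonempty Y] [DecidableEq Y] {d m : ℕ} (hd : 1 ≤ d) (hK : m + 1 = Fintype.card Y)
    (s : (Fin d → ℝ) → X → Y → ℝ)
    (pop : X × Y → ℝ) (hpop : ∀ p, 0 ≤ pop p) (hpop1 : ∑ p : X × Y, pop p = 1)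
    (h : X → Y → (Fin m → Y) → ℝ)
    (hh : ∀ x y1 yn, 0 ≤ h x y1 yn)
    (hh1 : ∀ x y1, ∑ yn : Fin m → Y, h x y1 yn = 1)
    (hsupp : ∀ x y1 yn, h x y1 yn ≠ 0 →
      Function.Injective (Fin.cons y1 yn : Fin (m + 1) → Y))
    (θ : Fin d → ℝ) (x : X) (hx : 0 < popX pop x) (y : Y) :
    gam s pop h θ x y = model s θ x y :=
  gam_eq_model_of_full_support_general hK s pop h hh1 hsupp θ x hx y
end
end
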